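/- arXiv:2403.08445 — 4 statements merged into one kernel-verified Lean document; each statement's English description precedes it below -/
import Mathlib

section
/- For any function f:[0,1]→ℝ with ∫₀¹ z(1-z)|f'(z)|² dz < ∞, one has ∫₀¹ |f(z) - ∫₀¹ f(w) dw|² dz ≤ (1/2) ∫₀¹ z(1-z)|f'(z)|² dz. -/
/-!
The variance of `f` on `[0, 1]` is half the mean of `(f z - f w)²` over pairs `(z, w)`. By the
fundamental theorem of calculus and Cauchy–Schwarz, `(f z - f w)² ≤ |z - w| ∫_{[w, z]} f'²`, and
integrating over `z` and `w` (Tonelli) turns the right-hand side into `∫ K(t) f'(t)² dt` with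
`K(t) = ∬ |z - w| 1[t ∈ [w, z]] dz dw = t (1 - t)`. Everything is done with `ℝ≥0∞`-valued
integrals, so nothing about integrability of `f'` near the endpoints is needed.
-/

open MeasureTheory ProbabilityTheory Set
open scoped ENNReal

theorem sq_integral_le_measureReal_mul_integral_sq {α : Type*} [MeasurableSpace α]
    {μ : Measure α} [IsFiniteMeasure μ] {g : α → ℝ} (hg : MemLp g 2 μ) :
    (∫ x, g x ∂μ) ^ 2 ≤ μ.real univ * ∫ x, g x ^ 2 ∂μ := by
  rcases eq_zero_or_neZero μ with rfl | hμ
  · simp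
  have hjensen := (Even.convexOn_pow (𝕜 := ℝ) even_two).map_average_le
    (continuous_pow 2).continuousOn isClosed_univ (.of_forall fun _ => mem_univ _)
    (hg.integrable one_le_two) hg.integrable_sq
  have hμ_pos : 0 < μ.real univ := by simp [measureReal_def, ENNReal.toReal_pos_iff, hμ.out]
  simp only [average_eq, smul_eq_mul, mul_pow] at hjensen
  rw [inv_pow, ← div_eq_inv_mul, ← div_eq_inv_mul, div_le_div_iff₀ (by positivity) hμ_pos]
    at hjensen
  nlinarith

theorem ofReal_two_mul_variance_eq_lintegral_lintegral {α : Type*} [MeasurableSpace α]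
    {μ : Measure α} [IsProbabilityMeasure μ] {f : α → ℝ} (hf : MemLp f 2 μ) :
    ENNReal.ofReal (2 * Var[f; μ]) = ∫⁻ x, ∫⁻ y, ENNReal.ofReal ((f x - f y) ^ 2) ∂μ ∂μ := by
  have hD : MemLp (fun p : α × α => f p.1 - f p.2) 2 (μ.prod μ) :=
    (hf.comp_fst μ).sub (hf.comp_snd μ)
  have hvar : Var[fun p : α × α => f p.1 - f p.2; μ.prod μ] = 2 * Var[f; μ] := by
    have := variance_add_prod hf hf.neg
    simp only [Pi.neg_apply, ← sub_eq_add_neg, variance_neg] at this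
    rw [this, two_mul]
  have hmean : (μ.prod μ)[fun p : α × α => f p.1 - f p.2] = 0 := by
    rw [integral_sub ((hf.integrable one_le_two).comp_fst μ)
      ((hf.integrable one_le_two).comp_snd μ), integral_fun_fst, integral_fun_snd]
    simp
  rw [← hvar, ofReal_variance hD, evariance_eq_lintegral_ofReal, hmean, lintegral_prod]
  · simp
  · exact ((hD.aestronglyMeasurable.aemeasurable.sub_const _).pow_const 2).ennreal_ofReal

theorem lintegral_lintegral_add_swap {α : Type*} [MeasurableSpace α] {μ : Measure α} [SFinite μ]
    {Φ : α → α → ℝ≥0∞} (hΦ : Measurable (Function.uncurry Φ)) :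
    ∫⁻ x, ∫⁻ y, (Φ x y + Φ y x) ∂μ ∂μ = 2 * ∫⁻ x, ∫⁻ y, Φ x y ∂μ ∂μ := by
  have hΦx : ∀ x, Measurable (Φ x) := fun x => hΦ.comp measurable_prodMk_left
  have hΦint : Measurable fun x => ∫⁻ y, Φ x y ∂μ := hΦ.lintegral_prod_right'
  rw [lintegral_congr fun x => lintegral_add_left (hΦx x) (fun y => Φ y x),
    lintegral_add_left hΦint, two_mul,
    lintegral_lintegral_swap (μ := μ) (f := fun y x => Φ x y)
      (hΦ.comp measurable_swap).aemeasurable]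

@[fun_prop]
theorem Measurable.indicator_Ioc_apply {α β : Type*} [MeasurableSpace α] [MeasurableSpace β]
    [Zero β] {g : ℝ → β} {l u x : α → ℝ} (hg : Measurable g) (hl : Measurable l)
    (hu : Measurable u) (hx : Measurable x) :
    Measurable fun p => (Ioc (l p) (u p)).indicator g (x p) := by
  simp only [indicator_apply, mem_Ioc]
  exact Measurable.ite ((measurableSet_lt hl hx).inter (measurableSet_le hx hu)) (hg.comp hx)
    measurable_const

@[fun_prop]
theorem Measurable.lintegral_Ioc {α : Type*} [MeasurableSpace α] {g : ℝ → ℝ≥0∞} {l u : α → ℝ}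
    (hg : Measurable g) (hl : Measurable l) (hu : Measurable u) :
    Measurable fun p => ∫⁻ t in Ioc (l p) (u p), g t := by
  simp_rw [← lintegral_indicator measurableSet_Ioc]
  fun_prop

theorem lintegral_Icc_ofReal_eq_ofReal_integral {φ : ℝ → ℝ} {a b : ℝ} (hab : a ≤ b)
    (hφ : ContinuousOn φ (Icc a b)) (h0 : ∀ x ∈ Icc a b, 0 ≤ φ x) :
    ∫⁻ x in Icc a b, ENNReal.ofReal (φ x) = ENNReal.ofReal (∫ x in a..b, φ x) := by
  rw [intervalIntegral.integral_of_le hab, ← integral_Icc_eq_integral_Ioc,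
    ofReal_integral_eq_lintegral_ofReal hφ.integrableOn_Icc
      (ae_restrict_of_forall_mem measurableSet_Icc h0)]

theorem lintegral_Icc_ofReal_sub_mul_indicator_Ioc {a b t z : ℝ} (ht : t ∈ Icc a b)
    (hz : z ∈ Icc a b) :
    ∫⁻ w in Icc a b, ENNReal.ofReal (z - w) * (Ioc w z).indicator 1 t =
      (Icc t b).indicator (fun z => ENNReal.ofReal ((t - a) * (z - (a + t) / 2))) z := by
  by_cases htz : t ≤ z
  · have hintegrand : ∀ w ∈ Icc a b, ENNReal.ofReal (z - w) * (Ioc w z).indicator 1 t =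
        (Ico a t).indicator (fun w => ENNReal.ofReal (z - w)) w := by
      intro w hw
      by_cases hwt : w < t <;> simp [hwt, htz, hw.1]
    rw [setLIntegral_congr_fun measurableSet_Icc hintegrand,
      lintegral_indicator measurableSet_Ico, Measure.restrict_restrict measurableSet_Ico,
      inter_eq_left.2 (Ico_subset_Icc_self.trans (Icc_subset_Icc_right ht.2)),
      setLIntegral_congr Ico_ae_eq_Icc,
      lintegral_Icc_ofReal_eq_ofReal_integral ht.1 (by fun_prop) (fun w hw => by linarith [hw.2]),
      intervalIntegral.integral_comp_sub_left (fun x => x),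
      indicator_of_mem (show z ∈ Icc t b from ⟨htz, hz.2⟩)]
    simp only [integral_id]
    congr 1; ring
  · simp [htz]

theorem lintegral_Icc_lintegral_Icc_ofReal_sub_mul_indicator_Ioc {a b t : ℝ} (ht : t ∈ Icc a b) :
    ∫⁻ z in Icc a b, ∫⁻ w in Icc a b, ENNReal.ofReal (z - w) * (Ioc w z).indicator 1 t =
      ENNReal.ofReal ((t - a) * (b - t) * (b - a) / 2) := by
  rw [setLIntegral_congr_fun measurableSet_Icc
      (fun z hz => lintegral_Icc_ofReal_sub_mul_indicator_Ioc ht hz),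
    lintegral_indicator measurableSet_Icc, Measure.restrict_restrict measurableSet_Icc,
    inter_eq_left.2 (Icc_subset_Icc_left ht.1),
    lintegral_Icc_ofReal_eq_ofReal_integral ht.2 (by fun_prop)
      (fun z hz => mul_nonneg (by linarith [ht.1]) (by linarith [hz.1, ht.1])),
    intervalIntegral.integral_const_mul, intervalIntegral.integral_comp_sub_right (fun x => x)]
  simp only [integral_id]
  congr 1; ring

theorem lintegral_Icc_lintegral_Icc_ofReal_sub_mul_lintegral_Ioc {g : ℝ → ℝ≥0∞}
    (hg : Measurable g) (a b : ℝ) :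
    ∫⁻ z in Icc a b, ∫⁻ w in Icc a b, ENNReal.ofReal (z - w) * ∫⁻ t in Ioc w z, g t =
      ∫⁻ t in Icc a b, ENNReal.ofReal ((t - a) * (b - t) * (b - a) / 2) * g t := by
  calc
    _ = ∫⁻ z in Icc a b, ∫⁻ w in Icc a b, ∫⁻ t in Icc a b,
        ENNReal.ofReal (z - w) * (Ioc w z).indicator 1 t * g t := by
      refine setLIntegral_congr_fun measurableSet_Icc fun z hz =>
        setLIntegral_congr_fun measurableSet_Icc fun w hw => ?_
      simp only [mul_assoc, ← indicator_mul_left, Pi.one_apply, one_mul]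
      rw [lintegral_const_mul' _ _ ENNReal.ofReal_ne_top, lintegral_indicator measurableSet_Ioc,
        Measure.restrict_restrict measurableSet_Ioc,
        inter_eq_left.2 (Ioc_subset_Icc_self.trans (Icc_subset_Icc hw.1 hz.2))]
    _ = ∫⁻ t in Icc a b, ∫⁻ z in Icc a b, ∫⁻ w in Icc a b,
        ENNReal.ofReal (z - w) * (Ioc w z).indicator 1 t * g t := by
      refine (lintegral_congr fun z => lintegral_lintegral_swap ?_).trans
        (lintegral_lintegral_swap ?_) <;> exact Measurable.aemeasurable (by fun_prop)
    _ = _ := by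
      refine setLIntegral_congr_fun measurableSet_Icc fun t ht => ?_
      rw [← lintegral_Icc_lintegral_Icc_ofReal_sub_mul_indicator_Ioc ht,
        ← lintegral_mul_const _ (by fun_prop)]
      exact lintegral_congr fun z => lintegral_mul_const _ (by fun_prop)

-- `ENNReal.ofReal` sends negative numbers to `0`, so exactly one summand survives.
theorem ofReal_abs_sub_mul_lintegral_uIoc_eq_add (g : ℝ → ℝ≥0∞) (w z : ℝ) :
    ENNReal.ofReal |z - w| * ∫⁻ t in uIoc w z, g t =
      ENNReal.ofReal (z - w) * (∫⁻ t in Ioc w z, g t) +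
        ENNReal.ofReal (w - z) * ∫⁻ t in Ioc z w, g t := by
  rcases le_total w z with h | h
  · simp [abs_of_nonneg (sub_nonneg.2 h), uIoc_of_le h,
      ENNReal.ofReal_of_nonpos (sub_nonpos.2 h)]
  · simp [abs_of_nonpos (sub_nonpos.2 h), uIoc_of_ge h,
      ENNReal.ofReal_of_nonpos (sub_nonpos.2 h)]

theorem lintegral_Icc_lintegral_Icc_ofReal_abs_sub_mul_lintegral_uIoc {g : ℝ → ℝ≥0∞}
    (hg : Measurable g) (a b : ℝ) :
    ∫⁻ z in Icc a b, ∫⁻ w in Icc a b, ENNReal.ofReal |z - w| * ∫⁻ t in uIoc w z, g t =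
      ∫⁻ t in Icc a b, ENNReal.ofReal ((t - a) * (b - t) * (b - a)) * g t := by
  simp_rw [ofReal_abs_sub_mul_lintegral_uIoc_eq_add]
  rw [lintegral_lintegral_add_swap (μ := volume.restrict (Icc a b))
      (Φ := fun z w => ENNReal.ofReal (z - w) * ∫⁻ t in Ioc w z, g t) (by fun_prop),
    lintegral_Icc_lintegral_Icc_ofReal_sub_mul_lintegral_Ioc hg,
    ← lintegral_const_mul' _ _ (by simp)]
  refine lintegral_congr fun t => ?_
  rw [← mul_assoc, ← ENNReal.ofReal_ofNat 2, ← ENNReal.ofReal_mul zero_le_two,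
    mul_div_cancel₀ _ two_ne_zero]

theorem ofReal_sq_sub_le_mul_lintegral_deriv_sq {f : ℝ → ℝ} {a b : ℝ} (hab : a ≤ b)
    (hf : ∀ x ∈ Icc a b, DifferentiableAt ℝ f x) :
    ENNReal.ofReal ((f b - f a) ^ 2) ≤
      ENNReal.ofReal (b - a) * ∫⁻ t in Ioc a b, ENNReal.ofReal (deriv f t ^ 2) := by
  have hmeas : AEStronglyMeasurable (deriv f) (volume.restrict (Ioc a b)) :=
    (measurable_deriv f).aestronglyMeasurable
  by_cases hsq : IntegrableOn (fun t => deriv f t ^ 2) (Ioc a b)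
  · have hL2 : MemLp (deriv f) 2 (volume.restrict (Ioc a b)) :=
      (memLp_two_iff_integrable_sq hmeas).2 hsq
    have hftc : ∫ t in Ioc a b, deriv f t = f b - f a := by
      rw [← intervalIntegral.integral_of_le hab]
      exact intervalIntegral.integral_deriv_eq_sub (fun x hx => hf x (uIcc_of_le hab ▸ hx))
        ((intervalIntegrable_iff_integrableOn_Ioc_of_le hab).2 (hL2.integrable one_le_two))
    calc ENNReal.ofReal ((f b - f a) ^ 2)
        ≤ ENNReal.ofReal ((b - a) * ∫ t in Ioc a b, deriv f t ^ 2) := by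
          gcongr
          simpa [hftc, Real.volume_real_Ioc_of_le hab] using
            sq_integral_le_measureReal_mul_integral_sq hL2
      _ = _ := by
          rw [ENNReal.ofReal_mul (sub_nonneg.2 hab),
            ofReal_integral_eq_lintegral_ofReal hsq (.of_forall fun _ => sq_nonneg _)]
  · rcases hab.eq_or_lt with rfl | hlt
    · simp
    have hinfinite : ∫⁻ t in Ioc a b, ENNReal.ofReal (deriv f t ^ 2) = ∞ := by
      by_contra h
      exact hsq ((lintegral_ofReal_ne_top_iff_integrable (hmeas.pow 2)
        (.of_forall fun _ => sq_nonneg _)).1 h)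
    rw [hinfinite, ENNReal.mul_top (ENNReal.ofReal_pos.2 (sub_pos.2 hlt)).ne']
    exact le_top

theorem ofReal_sq_sub_le_abs_mul_lintegral_deriv_sq {f : ℝ → ℝ} {w z : ℝ}
    (hf : ∀ x ∈ uIcc w z, DifferentiableAt ℝ f x) :
    ENNReal.ofReal ((f z - f w) ^ 2) ≤
      ENNReal.ofReal |z - w| * ∫⁻ t in uIoc w z, ENNReal.ofReal (deriv f t ^ 2) := by
  rcases le_total w z with h | h
  · rw [abs_of_nonneg (sub_nonneg.2 h), uIoc_of_le h]
    exact ofReal_sq_sub_le_mul_lintegral_deriv_sq h (uIcc_of_le h ▸ hf)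
  · rw [abs_sub_comm, abs_of_nonneg (sub_nonneg.2 h), uIoc_of_ge h, ← neg_sub, neg_sq]
    exact ofReal_sq_sub_le_mul_lintegral_deriv_sq h (uIcc_of_ge h ▸ hf)

theorem lintegral_Icc_lintegral_Icc_ofReal_sq_sub_le {f : ℝ → ℝ} {a b : ℝ}
    (hf : ∀ x ∈ Icc a b, DifferentiableAt ℝ f x) :
    ∫⁻ z in Icc a b, ∫⁻ w in Icc a b, ENNReal.ofReal ((f z - f w) ^ 2) ≤
      ∫⁻ t in Icc a b, ENNReal.ofReal ((t - a) * (b - t) * (b - a) * deriv f t ^ 2) := by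
  calc
    _ ≤ ∫⁻ z in Icc a b, ∫⁻ w in Icc a b,
        ENNReal.ofReal |z - w| * ∫⁻ t in uIoc w z, ENNReal.ofReal (deriv f t ^ 2) :=
      lintegral_mono_ae <| ae_restrict_of_forall_mem measurableSet_Icc fun z hz =>
        lintegral_mono_ae <| ae_restrict_of_forall_mem measurableSet_Icc fun w hw =>
          ofReal_sq_sub_le_abs_mul_lintegral_deriv_sq fun x hx => hf x (uIcc_subset_Icc hw hz hx)
    _ = _ := by
      rw [lintegral_Icc_lintegral_Icc_ofReal_abs_sub_mul_lintegral_uIoc (by fun_prop)]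
      refine setLIntegral_congr_fun measurableSet_Icc fun t ht => ?_
      rw [← ENNReal.ofReal_mul (mul_nonneg (mul_nonneg (sub_nonneg.2 ht.1) (sub_nonneg.2 ht.2))
        (sub_nonneg.2 (ht.1.trans ht.2)))]

/-- Weighted Poincaré inequality on `[0,1]` with degenerate weight `z(1-z)`. -/
theorem weighted_poincare
    (f : ℝ → ℝ)
    (hdiff : ∀ z ∈ Set.Icc (0:ℝ) 1, DifferentiableAt ℝ f z)
    (hint : IntervalIntegrable (fun z => z * (1 - z) * (deriv f z) ^ 2) volume 0 1) :
    ∫ z in (0:ℝ)..1, (f z - ∫ w in (0:ℝ)..1, f w) ^ 2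
      ≤ (1/2) * ∫ z in (0:ℝ)..1, z * (1 - z) * (deriv f z) ^ 2 := by
  let μ := volume.restrict (Icc (0:ℝ) 1)
  have : IsProbabilityMeasure μ := ⟨by simp [μ]⟩
  have hfc : ContinuousOn f (Icc 0 1) := fun z hz => (hdiff z hz).continuousAt.continuousWithinAt
  have hf : MemLp f 2 μ := (memLp_two_iff_integrable_sq
    (hfc.aestronglyMeasurable measurableSet_Icc)).2 (hfc.pow 2).integrableOn_Icc
  have hvar : ∫ z in (0:ℝ)..1, (f z - ∫ w in (0:ℝ)..1, f w) ^ 2 = Var[f; μ] := by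
    simp only [variance_eq_integral hf.aemeasurable, intervalIntegral.integral_of_le zero_le_one,
      integral_Icc_eq_integral_Ioc, μ]
  have hweight_nonneg : ∀ t ∈ Icc (0:ℝ) 1, 0 ≤ t * (1 - t) * deriv f t ^ 2 := fun t ht =>
    mul_nonneg (mul_nonneg ht.1 (sub_nonneg.2 ht.2)) (sq_nonneg _)
  have key : ENNReal.ofReal (2 * Var[f; μ]) ≤
      ENNReal.ofReal (∫ z in (0:ℝ)..1, z * (1 - z) * (deriv f z) ^ 2) := by
    rw [ofReal_two_mul_variance_eq_lintegral_lintegral hf,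
      intervalIntegral.integral_of_le zero_le_one, ← integral_Icc_eq_integral_Ioc,
      ofReal_integral_eq_lintegral_ofReal
        ((intervalIntegrable_iff_integrableOn_Icc_of_le zero_le_one).1 hint)
        (ae_restrict_of_forall_mem measurableSet_Icc hweight_nonneg)]
    simpa using lintegral_Icc_lintegral_Icc_ofReal_sq_sub_le hdiff
  have hB := intervalIntegral.integral_nonneg (μ := volume) zero_le_one hweight_nonneg
  rw [hvar]
  linarith [(ENNReal.ofReal_le_ofReal_iff hB).1 key]
end

section
/- If a differentiable nonnegative function F : [0,∞) → ℝ satisfies F'(t) ≤ -c F(t)³ for all t > 0 with constant c > 0 and F(0) > 0, then for all t ≥ 0, F(t)² ≤ F(0)² / (1 + 2c t F(0)²); in particular F(t) ≤ (2ct)^{-1/2} for t > 0. -/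
/-!
Since `F ≥ 0` and `F' ≤ -c F³ ≤ 0`, `F` is nonincreasing, so wherever `F t > 0` it stays positive on
`[0, t]`. There `(F⁻²)' = -2 F' / F³ ≥ 2c`, hence `F(t)⁻² ≥ F(0)⁻² + 2ct`, which rearranges to the
bound; dropping the `1` in the denominator gives `F(t)² ≤ (2ct)⁻¹`.
-/

open Set

lemma antitoneOn_Ici_of_deriv_le_neg_mul_pow_three {F : ℝ → ℝ} {c a : ℝ} (hc : 0 ≤ c)
    (hdiff : Differentiable ℝ F) (hnonneg : ∀ t ≥ a, 0 ≤ F t)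
    (hODE : ∀ t > a, deriv F t ≤ -c * F t ^ 3) :
    AntitoneOn F (Ici a) := by
  refine antitoneOn_of_deriv_nonpos (convex_Ici a) hdiff.continuous.continuousOn
    hdiff.differentiableOn fun t ht => ?_
  rw [interior_Ici] at ht
  nlinarith [hODE t ht, pow_nonneg (hnonneg t ht.le) 3]

lemma inv_sq_add_le_inv_sq_of_deriv_le_neg_mul_pow_three {F : ℝ → ℝ} {c a b : ℝ} (hab : a ≤ b)
    (hcont : ContinuousOn F (Icc a b)) (hdiff : DifferentiableOn ℝ F (Ioo a b))
    (hpos : ∀ t ∈ Icc a b, 0 < F t) (hODE : ∀ t ∈ Ioo a b, deriv F t ≤ -c * F t ^ 3) :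
    (F a ^ 2)⁻¹ + 2 * c * (b - a) ≤ (F b ^ 2)⁻¹ := by
  have hderiv : ∀ t ∈ Ioo a b,
      HasDerivAt (fun s => (F s ^ 2)⁻¹ - 2 * c * s) (-2 * deriv F t / F t ^ 3 - 2 * c) t := by
    intro t ht
    have hF : HasDerivAt F (deriv F t) t :=
      (hdiff.differentiableAt (isOpen_Ioo.mem_nhds ht)).hasDerivAt
    have hFt : F t ≠ 0 := (hpos t (Ioo_subset_Icc_self ht)).ne'
    refine (((hF.fun_pow 2).fun_inv (pow_ne_zero 2 hFt)).fun_sub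
      ((hasDerivAt_id t).const_mul (2 * c))).congr_deriv ?_
    field_simp
    ring
  have hmono : MonotoneOn (fun s => (F s ^ 2)⁻¹ - 2 * c * s) (Icc a b) := by
    refine monotoneOn_of_deriv_nonneg (convex_Icc a b) ?_ ?_ fun t ht => ?_
    · exact ((hcont.pow 2).inv₀ fun t ht => pow_ne_zero 2 (hpos t ht).ne').sub (by fun_prop)
    · rw [interior_Icc]
      exact fun t ht => (hderiv t ht).differentiableAt.differentiableWithinAt
    · rw [interior_Icc] at ht
      rw [(hderiv t ht).deriv, sub_nonneg]
      have hFt := hpos t (Ioo_subset_Icc_self ht)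
      rw [le_div_iff₀ (by positivity)]
      nlinarith [hODE t ht]
  have := hmono (left_mem_Icc.2 hab) (right_mem_Icc.2 hab) hab
  simp only at this
  linarith

lemma sq_le_div_of_deriv_le_neg_mul_pow_three {F : ℝ → ℝ} {c : ℝ} (hc : 0 ≤ c)
    (hdiff : Differentiable ℝ F) (hnonneg : ∀ t ≥ (0:ℝ), 0 ≤ F t)
    (hODE : ∀ t > (0:ℝ), deriv F t ≤ -c * F t ^ 3) {t : ℝ} (ht : 0 ≤ t) :
    F t ^ 2 ≤ F 0 ^ 2 / (1 + 2 * c * t * F 0 ^ 2) := by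
  rcases (hnonneg t ht).eq_or_lt with hFt | hFt
  · rw [← hFt, zero_pow two_ne_zero]
    positivity
  have hanti := antitoneOn_Ici_of_deriv_le_neg_mul_pow_three hc hdiff hnonneg hODE
  have hpos : ∀ s ∈ Icc 0 t, 0 < F s := fun s hs => hFt.trans_le (hanti hs.1 ht hs.2)
  have hF0 := hpos 0 (left_mem_Icc.2 ht)
  have key := inv_sq_add_le_inv_sq_of_deriv_le_neg_mul_pow_three ht
    hdiff.continuous.continuousOn hdiff.differentiableOn hpos fun s hs => hODE s hs.1
  calc F t ^ 2 ≤ ((F 0 ^ 2)⁻¹ + 2 * c * (t - 0))⁻¹ :=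
        (le_inv_comm₀ (by positivity) (by positivity)).1 key
    _ = F 0 ^ 2 / (1 + 2 * c * t * F 0 ^ 2) := by
        rw [sub_zero]
        field_simp

lemma le_rpow_neg_half_of_sq_le_inv {x y : ℝ} (hx : 0 ≤ x) (hy : 0 ≤ y) (h : y ^ 2 ≤ x⁻¹) :
    y ≤ x ^ (-(1:ℝ) / 2) := by
  rw [neg_div, Real.rpow_neg hx, ← Real.sqrt_eq_rpow, ← Real.sqrt_inv]
  exact (Real.le_sqrt hy (inv_nonneg.2 hx)).2 h

theorem ode_decay_general (F : ℝ → ℝ) (c : ℝ) (hc : 0 < c)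
    (hdiff : Differentiable ℝ F)
    (hnonneg : ∀ t ≥ (0:ℝ), 0 ≤ F t)
    (hODE : ∀ t > (0:ℝ), deriv F t ≤ -c * (F t) ^ 3) :
    (∀ t ≥ (0:ℝ), (F t) ^ 2 ≤ (F 0) ^ 2 / (1 + 2 * c * t * (F 0) ^ 2)) ∧
    (∀ t > (0:ℝ), F t ≤ (2 * c * t) ^ (-(1:ℝ)/2)) := by
  have hbound : ∀ t ≥ (0:ℝ), F t ^ 2 ≤ F 0 ^ 2 / (1 + 2 * c * t * F 0 ^ 2) := fun t ht =>
    sq_le_div_of_deriv_le_neg_mul_pow_three hc.le hdiff hnonneg hODE ht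
  refine ⟨hbound, fun t ht => le_rpow_neg_half_of_sq_le_inv (by positivity) (hnonneg t ht.le) ?_⟩
  refine (hbound t ht.le).trans ?_
  rw [div_le_iff₀ (by positivity)]
  field_simp
  linarith

/-- ODE comparison: if `F' ≤ -c F³`, `F ≥ 0`, `F(0) > 0`, then
`F(t)² ≤ F(0)²/(1 + 2ct F(0)²)` and `F(t) ≤ (2ct)^{-1/2}` for `t > 0`. -/
theorem ode_decay (F : ℝ → ℝ) (c : ℝ) (hc : 0 < c)
    (hdiff : Differentiable ℝ F)
    (hnonneg : ∀ t ≥ (0:ℝ), 0 ≤ F t)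
    (hF0 : 0 < F 0)
    (hODE : ∀ t > (0:ℝ), deriv F t ≤ -c * (F t) ^ 3) :
    (∀ t ≥ (0:ℝ), (F t) ^ 2 ≤ (F 0) ^ 2 / (1 + 2 * c * t * (F 0) ^ 2)) ∧
    (∀ t > (0:ℝ), F t ≤ (2 * c * t) ^ (-(1:ℝ)/2)) :=
  ode_decay_general F c hc hdiff hnonneg hODE
end

section
/- Let f₁(u) = a u² + g(u) with a > 0 and g ∈ C²(ℝ) satisfying ‖g''‖_∞ < 2a. Let u₋ > u₊, ε = u₋ - u₊, σ = (f₁(u₋) - f₁(u₊))/(u₋ - u₊), and for v ∈ (u₊, u₋) set z = (u₋ - v)/ε and h(v) = f₁(v) - f₁(u₋) - σ(v - u₋). Then ((2a - ‖g''‖_∞)/2) ε² z(1-z) ≤ -h(v) ≤ ((2a + ‖g''‖_∞)/2) ε² z(1-z). -/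
/-!
`-h(v)` is the gap at `v = z u₊ + (1 - z) u₋` between the chord of `f₁` over `[u₊, u₋]` and `f₁`.
Since `2a - M ≤ f₁'' ≤ 2a + M`, the function `f₁` is `(2a - M)`-strongly convex and `-f₁` is
`-(2a + M)`-strongly convex; for an `m`-strongly convex function this chord gap is at least
`(m / 2) z (1 - z) (u₋ - u₊)²`.
-/

open Set

lemma iteratedDeriv_two_const_mul_sq (c x : ℝ) :
    iteratedDeriv 2 (fun u => c * u ^ 2) x = 2 * c := by
  rw [iteratedDeriv_const_mul c (by fun_prop), iteratedDeriv_eq_iterate, iter_deriv_pow]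
  norm_num [Finset.prod_range_succ]
  ring

lemma strongConvexOn_univ_of_le_iteratedDeriv_two {f : ℝ → ℝ} {m : ℝ} (hf : ContDiff ℝ 2 f)
    (hm : ∀ x, m ≤ iteratedDeriv 2 f x) : StrongConvexOn univ m f := by
  rw [strongConvexOn_iff_convex]
  simp only [Real.norm_eq_abs, sq_abs]
  have hF : ContDiff ℝ 2 fun x => f x - m / 2 * x ^ 2 := by fun_prop
  refine convexOn_univ_of_deriv2_nonneg (hF.differentiable two_ne_zero)
    ((contDiff_succ_iff_deriv.mp (show ContDiff ℝ (1 + 1) _ from hF)).2.2.differentiable one_ne_zero)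
    fun x => ?_
  rw [← iteratedDeriv_eq_iterate, iteratedDeriv_fun_sub hf.contDiffAt (by fun_prop),
    iteratedDeriv_two_const_mul_sq]
  linarith [hm x]

lemma chord_gap_bounds_of_iteratedDeriv_two {f : ℝ → ℝ} {m M : ℝ} (hf : ContDiff ℝ 2 f)
    (hm : ∀ x, m ≤ iteratedDeriv 2 f x) (hM : ∀ x, iteratedDeriv 2 f x ≤ M)
    {θ : ℝ} (hθ₀ : 0 ≤ θ) (hθ₁ : θ ≤ 1) (x y : ℝ) :
    m / 2 * (x - y) ^ 2 * (θ * (1 - θ)) ≤ θ * f x + (1 - θ) * f y - f (θ * x + (1 - θ) * y) ∧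
      θ * f x + (1 - θ) * f y - f (θ * x + (1 - θ) * y) ≤ M / 2 * (x - y) ^ 2 * (θ * (1 - θ)) := by
  have hlower := (strongConvexOn_univ_of_le_iteratedDeriv_two hf hm).2 (mem_univ x) (mem_univ y)
    hθ₀ (sub_nonneg.mpr hθ₁) (add_sub_cancel θ 1)
  have hupper := (strongConvexOn_univ_of_le_iteratedDeriv_two (m := -M) hf.neg
    fun x => by simpa [iteratedDeriv_fun_neg] using hM x).2 (mem_univ x) (mem_univ y)
    hθ₀ (sub_nonneg.mpr hθ₁) (add_sub_cancel θ 1)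
  simp only [smul_eq_mul, Real.norm_eq_abs, sq_abs] at hlower hupper
  constructor <;> linarith

theorem profile_slope_bounds_general (a M : ℝ) (g : ℝ → ℝ)
    (hg : ContDiff ℝ 2 g)
    (hM : ∀ s : ℝ, |iteratedDeriv 2 g s| ≤ M)
    (um up : ℝ) :
    let f₁ : ℝ → ℝ := fun u => a * u ^ 2 + g u
    let ε : ℝ := um - up
    let σ : ℝ := (f₁ um - f₁ up) / (um - up)
    ∀ v : ℝ, up < v → v < um →
      let z : ℝ := (um - v) / ε
      let h : ℝ := f₁ v - f₁ um - σ * (v - um)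
      ((2 * a - M) / 2) * ε ^ 2 * (z * (1 - z)) ≤ -h ∧
      -h ≤ ((2 * a + M) / 2) * ε ^ 2 * (z * (1 - z)) := by
  intro f₁ ε σ v hv₁ hv₂ z h
  have hε : 0 < um - up := sub_pos.mpr (hv₁.trans hv₂)
  have hz₀ : 0 ≤ z := div_nonneg (sub_nonneg.mpr hv₂.le) hε.le
  have hz₁ : z ≤ 1 := (div_le_one hε).mpr (by linarith)
  have hv : v = z * up + (1 - z) * um := by
    simp only [z, ε]
    field_simp
    ring
  have hh : -h = z * f₁ up + (1 - z) * f₁ um - f₁ (z * up + (1 - z) * um) := by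
    rw [← hv]
    simp only [h, σ, z, ε]
    field_simp
    ring
  have hf₁'' (x : ℝ) : iteratedDeriv 2 f₁ x = 2 * a + iteratedDeriv 2 g x := by
    rw [iteratedDeriv_fun_add (by fun_prop) hg.contDiffAt, iteratedDeriv_two_const_mul_sq]
  obtain ⟨hlower, hupper⟩ := chord_gap_bounds_of_iteratedDeriv_two (f := f₁) (m := 2 * a - M)
    (M := 2 * a + M) (by fun_prop) (fun x => by linarith [hf₁'' x, (abs_le.mp (hM x)).1])
    (fun x => by linarith [hf₁'' x, (abs_le.mp (hM x)).2]) hz₀ hz₁ up um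
  have hsq : ε ^ 2 = (up - um) ^ 2 := by ring
  rw [hh, hsq]
  constructor <;> linarith

/-- Two-sided bound for the slope of the viscous shock profile:
for `f₁(u) = a u² + g(u)` with `‖g''‖_∞ ≤ M < 2a`,
`((2a - M)/2) ε² z(1-z) ≤ -h(v) ≤ ((2a + M)/2) ε² z(1-z)`. -/
theorem profile_slope_bounds (a M : ℝ) (g : ℝ → ℝ)
    (ha : 0 < a) (hg : ContDiff ℝ 2 g)
    (hM : ∀ s : ℝ, |iteratedDeriv 2 g s| ≤ M) (hM2 : M < 2 * a)
    (um up : ℝ) (hlt : up < um) :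
    let f₁ : ℝ → ℝ := fun u => a * u ^ 2 + g u
    let ε : ℝ := um - up
    let σ : ℝ := (f₁ um - f₁ up) / (um - up)
    ∀ v : ℝ, up < v → v < um →
      let z : ℝ := (um - v) / ε
      let h : ℝ := f₁ v - f₁ um - σ * (v - um)
      ((2 * a - M) / 2) * ε ^ 2 * (z * (1 - z)) ≤ -h ∧
      -h ≤ ((2 * a + M) / 2) * ε ^ 2 * (z * (1 - z)) :=
  profile_slope_bounds_general a M g hg hM um up
end

section
/- Let ũ : ℝ → ℝ be C¹, strictly decreasing, with limits u₋ > u₊ at ∓∞ and ũ' ∈ L¹ ∩ L²(ℝ). Define F(τ) = ∫_ℝ |ũ(x+τ) - ũ(x)|² dx and β₁ = 2∫_ℝ ∫_{x-1}^{x} ũ'(x)ũ'(ζ) dζ dx. Then β₁ > 0, and there exists β > 0 such that for all τ ∈ ℝ, |τ| ≤ F(τ)/β + 1. -/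
/-!
Since `w (x + τ) - w x = ∫ t in x..x + τ, w' t`, this difference is the convolution of `w'` with
an indicator, hence integrable, and it is bounded by `‖w'‖₁`; so its square is integrable (and
`F τ` is not the junk value of a divergent integral). For `τ ≥ 1` and `x ∈ (-τ/2, 0]`
monotonicity gives `w x - w (x + τ) ≥ w 0 - w (1/2) > 0` on a set of length `τ/2`, so `F` grows
at least linearly, and `F` is even by translation invariance. The inner integral of `β₁` is
`w' x * (w x - w (x - 1))`, a product of two negative factors.
-/

open MeasureTheory Filter intervalIntegral

theorem integral_sq_sub_comp_add_neg (f : ℝ → ℝ) (τ : ℝ) :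
    ∫ x, (f (x + -τ) - f x) ^ 2 = ∫ x, (f (x + τ) - f x) ^ 2 := by
  refine (integral_add_right_eq_self _ τ).symm.trans ?_
  simp only [add_neg_cancel_right]
  congr 1
  ext x
  ring

section

variable {f : ℝ → ℝ}

theorem abs_sub_le_integral_norm_deriv (hf : Differentiable ℝ f) (hf' : Integrable (deriv f))
    (a b : ℝ) : |f b - f a| ≤ ∫ x, ‖deriv f x‖ := by
  rw [← integral_deriv_eq_sub (fun x _ => hf x) hf'.intervalIntegrable]
  exact (norm_integral_le_integral_norm_uIoc ..).trans
    (setIntegral_le_integral hf'.norm (Eventually.of_forall fun _ => norm_nonneg _))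

theorem integrable_sub_comp_add_of_nonneg (hf : Differentiable ℝ f) (hf' : Integrable (deriv f))
    {τ : ℝ} (hτ : 0 ≤ τ) : Integrable fun x => f (x + τ) - f x := by
  have hconv : Integrable
      (convolution (deriv f) ((Set.Icc (-τ) 0).indicator 1) (ContinuousLinearMap.lsmul ℝ ℝ)) :=
    hf'.integrable_convolution _
      ((integrable_indicator_iff measurableSet_Icc).2
        (integrableOn_const (C := (1 : ℝ)) measure_Icc_lt_top.ne))
  refine hconv.congr (Eventually.of_forall fun x => ?_)
  have hkernel : ∀ t, deriv f t * (Set.Icc (-τ) 0).indicator 1 (x - t)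
      = (Set.Icc x (x + τ)).indicator (deriv f) t := by
    intro t
    by_cases ht : t ∈ Set.Icc x (x + τ)
    · rw [Set.indicator_of_mem ht, Set.indicator_of_mem (by constructor <;> linarith [ht.1, ht.2])]
      simp
    · rw [Set.indicator_of_notMem ht,
        Set.indicator_of_notMem fun h => ht ⟨by linarith [h.2], by linarith [h.1]⟩]
      simp
  simp only [convolution_def, ContinuousLinearMap.lsmul_apply, smul_eq_mul, hkernel]
  rw [MeasureTheory.integral_indicator measurableSet_Icc, integral_Icc_eq_integral_Ioc,
    ← integral_of_le (by linarith), integral_deriv_eq_sub (fun t _ => hf t)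
      hf'.intervalIntegrable]

theorem integrable_sub_comp_add (hf : Differentiable ℝ f) (hf' : Integrable (deriv f))
    (τ : ℝ) : Integrable fun x => f (x + τ) - f x := by
  rcases le_total 0 τ with hτ | hτ
  · exact integrable_sub_comp_add_of_nonneg hf hf' hτ
  · have hneg := integrable_sub_comp_add_of_nonneg hf hf' (neg_nonneg.2 hτ)
    refine (hneg.comp_add_right τ).neg.congr (Eventually.of_forall fun x => ?_)
    simp

theorem integrable_sq_sub_comp_add (hf : Differentiable ℝ f) (hf' : Integrable (deriv f))
    (τ : ℝ) : Integrable fun x => (f (x + τ) - f x) ^ 2 := by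
  simp_rw [sq]
  refine (integrable_sub_comp_add hf hf' τ).bdd_mul (c := ∫ x, ‖deriv f x‖)
    ((hf.continuous.comp (continuous_add_const τ)).sub hf.continuous).aestronglyMeasurable
    (Eventually.of_forall fun x => ?_)
  simpa only [Real.norm_eq_abs] using abs_sub_le_integral_norm_deriv hf hf' x (x + τ)

theorem mul_le_integral_sq_sub_comp_add (hf : Antitone f) {τ : ℝ}
    (hint : Integrable fun x => (f (x + τ) - f x) ^ 2) (hτ : 1 ≤ τ) :
    (f 0 - f (1 / 2)) ^ 2 * (τ / 2) ≤ ∫ x, (f (x + τ) - f x) ^ 2 := by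
  have hgap :
      ∀ x ∈ Set.Ioc (-(τ / 2)) 0, (f 0 - f (1 / 2)) ^ 2 ≤ (f (x + τ) - f x) ^ 2 := by
    intro x hx
    have h0 : f 0 ≤ f x := hf hx.2
    have h1 : f (x + τ) ≤ f (1 / 2) := hf (by linarith [hx.1])
    have h2 : f (1 / 2) ≤ f 0 := hf (by norm_num)
    nlinarith
  calc (f 0 - f (1 / 2)) ^ 2 * (τ / 2)
      = (f 0 - f (1 / 2)) ^ 2 * volume.real (Set.Ioc (-(τ / 2)) 0) := by
        rw [Real.volume_real_Ioc, max_eq_left (by linarith)]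
        ring
    _ ≤ ∫ x in Set.Ioc (-(τ / 2)) 0, (f (x + τ) - f x) ^ 2 :=
        setIntegral_ge_of_const_le_real measurableSet_Ioc measure_Ioc_lt_top.ne hgap
          hint.integrableOn
    _ ≤ ∫ x, (f (x + τ) - f x) ^ 2 :=
        setIntegral_le_integral hint (Eventually.of_forall fun _ => sq_nonneg _)

theorem mul_abs_le_integral_sq_sub_comp_add (hf : Differentiable ℝ f)
    (hf' : Integrable (deriv f)) (hanti : Antitone f) {τ : ℝ} (hτ : 1 ≤ |τ|) :
    (f 0 - f (1 / 2)) ^ 2 / 2 * |τ| ≤ ∫ x, (f (x + τ) - f x) ^ 2 := by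
  rcases le_total 0 τ with hτ₀ | hτ₀
  · rw [abs_of_nonneg hτ₀] at hτ ⊢
    linarith [mul_le_integral_sq_sub_comp_add hanti (integrable_sq_sub_comp_add hf hf' τ) hτ]
  · rw [abs_of_nonpos hτ₀] at hτ ⊢
    have := mul_le_integral_sq_sub_comp_add hanti (integrable_sq_sub_comp_add hf hf' (-τ)) hτ
    rw [← integral_sq_sub_comp_add_neg f τ]
    linarith

theorem integral_deriv_mul_intervalIntegral_deriv_pos (hf' : Integrable (deriv f))
    (hneg : ∀ x, deriv f x < 0) :
    0 < ∫ x, ∫ ζ in (x - 1)..x, deriv f x * deriv f ζ := by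
  have hf : Differentiable ℝ f := fun x => differentiableAt_of_deriv_ne_zero (hneg x).ne
  have hinner (x : ℝ) :
      ∫ ζ in (x - 1)..x, deriv f x * deriv f ζ = deriv f x * (f x - f (x - 1)) := by
    rw [intervalIntegral.integral_const_mul,
      integral_deriv_eq_sub (fun t _ => hf t) hf'.intervalIntegrable]
  simp_rw [hinner]
  have hpos : ∀ x, 0 < deriv f x * (f x - f (x - 1)) := fun x =>
    mul_pos_of_neg_of_neg (hneg x) (sub_neg.2 (strictAnti_of_deriv_neg hneg (sub_one_lt x)))
  have hint : Integrable fun x => deriv f x * (f x - f (x - 1)) :=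
    hf'.mul_bdd (c := ∫ x, ‖deriv f x‖)
      (hf.continuous.sub (hf.continuous.comp (continuous_sub_right 1))).aestronglyMeasurable
      (Eventually.of_forall fun x => by
        simpa only [Real.norm_eq_abs] using abs_sub_le_integral_norm_deriv hf hf' (x - 1) x)
  rw [integral_pos_iff_support_of_nonneg (fun x => (hpos x).le) hint,
    Function.support_eq_univ fun x => (hpos x).ne']
  simp

end

theorem shift_bound_by_L2_general
    (w : ℝ → ℝ)
    (hC1 : ContDiff ℝ 1 w)
    (hanti : StrictAnti w)
    (hderiv_neg : ∀ x : ℝ, deriv w x < 0)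
    (hL1 : Integrable (deriv w))
    (F : ℝ → ℝ)
    (hF : ∀ τ, F τ = ∫ x : ℝ, (w (x + τ) - w x) ^ 2) :
    0 < 2 * ∫ x : ℝ, ∫ ζ in (x - 1)..x, deriv w x * deriv w ζ ∧
    ∃ β > (0:ℝ), ∀ τ : ℝ, |τ| ≤ F τ / β + 1 := by
  refine ⟨mul_pos two_pos (integral_deriv_mul_intervalIntegral_deriv_pos hL1 hderiv_neg), ?_⟩
  have hd : 0 < w 0 - w (1 / 2) := sub_pos.2 (hanti one_half_pos)
  have hβ : 0 < (w 0 - w (1 / 2)) ^ 2 / 2 := by positivity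
  refine ⟨_, hβ, fun τ => ?_⟩
  rcases le_or_gt |τ| 1 with hτ | hτ
  · have hF_nonneg : 0 ≤ F τ := hF τ ▸ integral_nonneg fun _ => sq_nonneg _
    linarith [div_nonneg hF_nonneg hβ.le]
  · have hlin := mul_abs_le_integral_sq_sub_comp_add (hC1.differentiable one_ne_zero) hL1
      hanti.antitone hτ.le
    rw [← hF] at hlin
    linarith [(le_div_iff₀' hβ).2 hlin]

/-- Linear lower bound on the squared `L²` distance between a shock profile and
its translate: `β₁ > 0` and `|τ| ≤ F(τ)/β + 1` for some `β > 0`. -/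
theorem shift_bound_by_L2 (u_minus u_plus : ℝ) (hjump : u_plus < u_minus)
    (w : ℝ → ℝ)
    (hC1 : ContDiff ℝ 1 w)
    (hanti : StrictAnti w)
    (hderiv_neg : ∀ x : ℝ, deriv w x < 0)
    (hlim_m : Tendsto w atBot (nhds u_minus))
    (hlim_p : Tendsto w atTop (nhds u_plus))
    (hL1 : Integrable (deriv w))
    (hL2 : Integrable (fun x => (deriv w x) ^ 2))
    (F : ℝ → ℝ)
    (hF : ∀ τ, F τ = ∫ x : ℝ, (w (x + τ) - w x) ^ 2) :
    0 < 2 * ∫ x : ℝ, ∫ ζ in (x - 1)..x, deriv w x * deriv w ζ ∧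
    ∃ β > (0:ℝ), ∀ τ : ℝ, |τ| ≤ F τ / β + 1 :=
  shift_bound_by_L2_general w hC1 hanti hderiv_neg hL1 F hF
end
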